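/- For any connected graph G on n ≥ 2 vertices, γ(G) = n / max_{u ∈ V(G)} tr(u), where tr(u) is the sum of distances from u to all other vertices. -/

import Mathlib

/-!
If `x` has mean zero and `|x v| = 1`, then `n = |∑ w, (x v - x w)|`, and along a geodesic
`x` changes by at most `edgeSup G x` per edge, so `n ≤ tr v · edgeSup G x ≤ T · edgeSup G x`
with `T = max tr`. Conversely, for a vertex `u` of maximal transmission, the vector
`x w = n d(u, w) / T - 1` has mean zero, takes the value `-1` at `u`, and satisfies
`|x w| ≤ 1` because `n d(u, w) ≤ tr u + tr w ≤ 2T`; adjacent vertices differ by at most `n / T`.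
-/

open Finset SimpleGraph

/-- `max_{uv ∈ E(G)} |x_u - x_v|` (as a real supremum over adjacent pairs). -/
noncomputable def edgeSup {V : Type*} (G : SimpleGraph V) (x : V → ℝ) : ℝ :=
  ⨆ p : {p : V × V // G.Adj p.1 p.2}, |x p.1.1 - x p.1.2|

/-- The `l_∞`-smoothing parameter `γ(G)`. -/
noncomputable def gamma {V : Type*} [Fintype V] (G : SimpleGraph V) : ℝ :=
  sInf {y | ∃ x : V → ℝ, (∑ v, x v) = 0 ∧ (⨆ v, |x v|) = 1 ∧ y = edgeSup G x}

/-- Transmission of a vertex: sum of graph distances to all vertices. -/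
noncomputable def transmission {V : Type*} [Fintype V] (G : SimpleGraph V) (u : V) : ℕ :=
  ∑ v, G.dist u v

section

variable {V : Type*} {G : SimpleGraph V}

lemma edgeSup_nonneg (x : V → ℝ) : 0 ≤ edgeSup G x :=
  Real.iSup_nonneg fun _ => abs_nonneg _

lemma edgeSup_le {x : V → ℝ} {S : ℝ} (h : ∀ a b, G.Adj a b → |x a - x b| ≤ S) (hS : 0 ≤ S) :
    edgeSup G x ≤ S :=
  Real.iSup_le (fun p => h _ _ p.2) hS

lemma abs_sub_le_edgeSup [Finite V] (x : V → ℝ) {a b : V} (hab : G.Adj a b) :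
    |x a - x b| ≤ edgeSup G x :=
  le_ciSup (f := fun p : {p : V × V // G.Adj p.1 p.2} => |x p.1.1 - x p.1.2|)
    (Set.finite_range _).bddAbove ⟨(a, b), hab⟩

lemma SimpleGraph.Walk.abs_sub_le_length_mul {x : V → ℝ} {S : ℝ}
    (h : ∀ a b, G.Adj a b → |x a - x b| ≤ S) {u v : V} (p : G.Walk u v) :
    |x u - x v| ≤ p.length * S := by
  induction p with
  | nil => simp
  | @cons a b c hab q ih =>
    calc |x a - x c| ≤ |x a - x b| + |x b - x c| := abs_sub_le _ _ _
      _ ≤ S + q.length * S := add_le_add (h a b hab) ih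
      _ = (q.cons hab).length * S := by push_cast [Walk.length_cons]; ring

noncomputable def normalizedDist [Fintype V] (G : SimpleGraph V) (u w : V) : ℝ :=
  Fintype.card V * G.dist u w / transmission G u - 1

section normalizedDist

variable [Fintype V] {u : V}

lemma normalizedDist_self : normalizedDist G u u = -1 := by
  simp [normalizedDist]

lemma sum_normalizedDist (hu : transmission G u ≠ 0) : ∑ w, normalizedDist G u w = 0 := by
  have hsum : ∑ w, (G.dist u w : ℝ) = transmission G u := by simp [transmission]
  simp only [normalizedDist, sum_sub_distrib, ← sum_div, ← mul_sum, hsum]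
  field_simp
  simp

end normalizedDist

namespace SimpleGraph.Connected

lemma abs_sub_le_dist_mul_edgeSup [Finite V] (hc : G.Connected) (x : V → ℝ) (u v : V) :
    |x u - x v| ≤ G.dist u v * edgeSup G x := by
  obtain ⟨p, hp⟩ := hc.exists_walk_length_eq_dist u v
  simpa [hp] using p.abs_sub_le_length_mul fun a b hab => abs_sub_le_edgeSup x hab

lemma abs_dist_sub_dist_le_one (hc : G.Connected) (u : V) {a b : V} (hab : G.Adj a b) :
    |(G.dist u a : ℝ) - G.dist u b| ≤ 1 := by
  have hb : G.dist u b ≤ G.dist u a + 1 := dist_eq_one_iff_adj.mpr hab ▸ hc.dist_triangle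
  have ha : G.dist u a ≤ G.dist u b + 1 := dist_eq_one_iff_adj.mpr hab.symm ▸ hc.dist_triangle
  rw [abs_sub_le_iff, sub_le_iff_le_add', sub_le_iff_le_add']
  exact ⟨mod_cast ha, mod_cast hb⟩

variable [Fintype V]

lemma card_mul_dist_le_transmission_add (hc : G.Connected) (u w : V) :
    Fintype.card V * G.dist u w ≤ transmission G u + transmission G w := by
  calc Fintype.card V * G.dist u w = ∑ _v : V, G.dist u w := by simp
    _ ≤ ∑ v, (G.dist u v + G.dist w v) := by
        gcongr with v
        rw [dist_comm (u := w)]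
        exact hc.dist_triangle
    _ = transmission G u + transmission G w := sum_add_distrib

lemma transmission_pos (hc : G.Connected) (hV : 1 < Fintype.card V) (u : V) :
    0 < transmission G u := by
  obtain ⟨w, hw⟩ := Fintype.exists_ne_of_one_lt_card hV u
  exact (hc.pos_dist_of_ne hw.symm).trans_le
    (single_le_sum (f := G.dist u) (fun _ _ => Nat.zero_le _) (mem_univ w))

lemma card_mul_abs_le_transmission_mul_edgeSup (hc : G.Connected) {x : V → ℝ}
    (hsum : ∑ v, x v = 0) (v : V) :
    Fintype.card V * |x v| ≤ transmission G v * edgeSup G x := by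
  have hcard : Fintype.card V * x v = ∑ w, (x v - x w) := by
    simp [sum_sub_distrib, hsum]
  calc Fintype.card V * |x v| = |∑ w, (x v - x w)| := by
        rw [← hcard, abs_mul, Nat.abs_cast]
    _ ≤ ∑ w, |x v - x w| := abs_sum_le_sum_abs _ _
    _ ≤ ∑ w, (G.dist v w : ℝ) * edgeSup G x :=
        sum_le_sum fun w _ => hc.abs_sub_le_dist_mul_edgeSup x v w
    _ = transmission G v * edgeSup G x := by simp [transmission, sum_mul]

lemma card_div_le_edgeSup (hc : G.Connected) {T : ℕ} (hT : ∀ v, transmission G v ≤ T)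
    {x : V → ℝ} (hsum : ∑ v, x v = 0) (hsup : ⨆ v, |x v| = 1) :
    (Fintype.card V : ℝ) / T ≤ edgeSup G x := by
  have : Nonempty V := hc.nonempty
  obtain ⟨v, hv⟩ := exists_eq_ciSup_of_finite (f := fun v => |x v|)
  refine div_le_of_le_mul₀ T.cast_nonneg (edgeSup_nonneg x) ?_
  calc (Fintype.card V : ℝ) = Fintype.card V * |x v| := by simp [hv, hsup]
    _ ≤ transmission G v * edgeSup G x := hc.card_mul_abs_le_transmission_mul_edgeSup hsum v
    _ ≤ edgeSup G x * T := by
        rw [mul_comm]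
        gcongr
        · exact edgeSup_nonneg x
        · exact_mod_cast hT v

variable {u : V}

lemma abs_normalizedDist_le_one (hc : G.Connected)
    (hmax : ∀ w, transmission G w ≤ transmission G u) (w : V) :
    |normalizedDist G u w| ≤ 1 := by
  have hle : Fintype.card V * G.dist u w ≤ 2 * transmission G u := by
    linarith [hc.card_mul_dist_le_transmission_add u w, hmax w]
  have hle_two : (Fintype.card V : ℝ) * G.dist u w / transmission G u ≤ 2 :=
    div_le_of_le_mul₀ (by positivity) zero_le_two (by exact_mod_cast hle)
  rw [normalizedDist, abs_le]
  constructor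
  · linarith [(by positivity : (0 : ℝ) ≤ Fintype.card V * G.dist u w / transmission G u)]
  · linarith

lemma iSup_abs_normalizedDist (hc : G.Connected)
    (hmax : ∀ w, transmission G w ≤ transmission G u) :
    ⨆ w, |normalizedDist G u w| = 1 := by
  have : Nonempty V := hc.nonempty
  refine le_antisymm (ciSup_le (hc.abs_normalizedDist_le_one hmax)) ?_
  simpa [normalizedDist_self] using
    le_ciSup (f := fun w => |normalizedDist G u w|) (Set.finite_range _).bddAbove u

lemma edgeSup_normalizedDist_le (hc : G.Connected) (u : V) :
    edgeSup G (normalizedDist G u) ≤ Fintype.card V / transmission G u := by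
  refine edgeSup_le (fun a b hab => ?_) (by positivity)
  have hdiff : normalizedDist G u a - normalizedDist G u b
      = Fintype.card V / transmission G u * ((G.dist u a : ℝ) - G.dist u b) := by
    simp only [normalizedDist]
    ring
  rw [hdiff, abs_mul, abs_of_nonneg (by positivity)]
  exact mul_le_of_le_one_right (by positivity) (hc.abs_dist_sub_dist_le_one u hab)

end SimpleGraph.Connected

end

theorem stmt4 {V : Type*} [Fintype V] (G : SimpleGraph V) (hc : G.Connected)
    (hn : 2 ≤ Fintype.card V) :
    gamma G = (Fintype.card V : ℝ) / ((Finset.univ.sup (transmission G) : ℕ) : ℝ) := by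
  have : Nonempty V := hc.nonempty
  obtain ⟨u, -, hu⟩ := exists_mem_eq_sup univ univ_nonempty (transmission G)
  have hmax : ∀ w, transmission G w ≤ transmission G u := fun w => hu ▸ le_sup (mem_univ w)
  have hu_ne : transmission G u ≠ 0 := (hc.transmission_pos hn u).ne'
  rw [hu]
  refine IsLeast.csInf_eq ⟨⟨normalizedDist G u, sum_normalizedDist hu_ne,
    hc.iSup_abs_normalizedDist hmax, ?_⟩, ?_⟩
  · exact le_antisymm (hc.card_div_le_edgeSup hmax (sum_normalizedDist hu_ne)
      (hc.iSup_abs_normalizedDist hmax)) (hc.edgeSup_normalizedDist_le u)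
  · rintro _ ⟨x, hsum, hsup, rfl⟩
    exact hc.card_div_le_edgeSup hmax hsum hsup
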